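/- For every real x with 0 ≤ x ≤ 1, the binary entropy function satisfies h(1/2 - x/2) ≤ 1 - x²/2. -/

import Mathlib

/-!
Write `p = (1 - x) / 2`. In nats, `h(p) = log 2 - f(x) / 2` with
`f(x) = (1 + x) log (1 + x) + (1 - x) log (1 - x)`. Since `f(0) = f'(0) = 0` and
`f'(x) - 2x = log (1 + x) - log (1 - x) - 2x ≥ 0` (odd power series with nonnegative
coefficients), `f(x) ≥ x²`. Dividing by `log 2 ≤ 1` converts to bits.
-/

/-- The binary entropy function `h(p) = -p log₂ p - (1-p) log₂ (1-p)`.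
(Note `Real.logb 2 0 = 0` in Mathlib, so `h 0 = h 1 = 0` holds automatically.) -/
noncomputable def binEntropy2 (p : ℝ) : ℝ :=
  -p * Real.logb 2 p - (1 - p) * Real.logb 2 (1 - p)

open Real Set

lemma two_mul_le_log_one_add_sub_log_one_sub {x : ℝ} (hx0 : 0 ≤ x) (hx1 : x < 1) :
    2 * x ≤ log (1 + x) - log (1 - x) := by
  have hsum := hasSum_log_sub_log_of_abs_lt_one (abs_lt.2 ⟨by linarith, hx1⟩)
  simpa using le_hasSum hsum 0 fun k _ => by positivity

lemma hasDerivAt_mul_log_one_add_add_mul_log_one_sub {x : ℝ} (hp : 1 + x ≠ 0) (hm : 1 - x ≠ 0) :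
    HasDerivAt (fun t => (1 + t) * log (1 + t) + (1 - t) * log (1 - t))
      (log (1 + x) - log (1 - x)) x := by
  have hadd := (hasDerivAt_mul_log hp).comp x ((hasDerivAt_id x).const_add 1)
  have hsub := (hasDerivAt_mul_log hm).comp x ((hasDerivAt_id x).const_sub 1)
  exact (hadd.fun_add hsub).congr_deriv (by ring)

lemma sq_le_mul_log_one_add_add_mul_log_one_sub {x : ℝ} (hx0 : 0 ≤ x) (hx1 : x ≤ 1) :
    x ^ 2 ≤ (1 + x) * log (1 + x) + (1 - x) * log (1 - x) := by
  set g : ℝ → ℝ := fun t => (1 + t) * log (1 + t) + (1 - t) * log (1 - t) - t ^ 2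
  have hg : MonotoneOn g (Icc 0 1) := by
    have hcont : Continuous g :=
      ((continuous_mul_log.comp (by fun_prop)).add
        (continuous_mul_log.comp (by fun_prop))).sub (by fun_prop)
    have hderiv : ∀ t ∈ Ioo (0 : ℝ) 1, HasDerivAt g (log (1 + t) - log (1 - t) - 2 * t) t :=
      fun t ht => by
        simpa using (hasDerivAt_mul_log_one_add_add_mul_log_one_sub
          (by linarith [ht.1]) (by linarith [ht.2])).fun_sub (hasDerivAt_pow 2 t)
    refine monotoneOn_of_deriv_nonneg (convex_Icc 0 1) hcont.continuousOn ?_ ?_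
    · rw [interior_Icc]
      exact fun t ht => (hderiv t ht).differentiableAt.differentiableWithinAt
    · rw [interior_Icc]
      intro t ht
      rw [(hderiv t ht).deriv]
      linarith [two_mul_le_log_one_add_sub_log_one_sub ht.1.le ht.2]
  simpa [g] using hg (left_mem_Icc.2 zero_le_one) ⟨hx0, hx1⟩ hx0

lemma half_mul_log_half (a : ℝ) : a / 2 * log (a / 2) = (a * log a - a * log 2) / 2 := by
  rcases eq_or_ne a 0 with rfl | ha
  · simp
  · rw [log_div ha two_ne_zero]; ring

lemma binEntropy_half_sub_half (x : ℝ) :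
    binEntropy (1 / 2 - x / 2) =
      log 2 - ((1 + x) * log (1 + x) + (1 - x) * log (1 - x)) / 2 := by
  have hm := half_mul_log_half (1 - x)
  have hp := half_mul_log_half (1 + x)
  rw [binEntropy_eq_negMulLog_add_negMulLog_one_sub, negMulLog, negMulLog,
    show 1 / 2 - x / 2 = (1 - x) / 2 by ring, show 1 - (1 - x) / 2 = (1 + x) / 2 by ring]
  linarith

lemma binEntropy_half_sub_half_le {x : ℝ} (hx0 : 0 ≤ x) (hx1 : x ≤ 1) :
    binEntropy (1 / 2 - x / 2) ≤ log 2 - x ^ 2 / 2 := by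
  rw [binEntropy_half_sub_half]
  linarith [sq_le_mul_log_one_add_add_mul_log_one_sub hx0 hx1]

lemma binEntropy2_eq_binEntropy_div_log_two (p : ℝ) : binEntropy2 p = binEntropy p / log 2 := by
  rw [binEntropy2, binEntropy_eq_negMulLog_add_negMulLog_one_sub, negMulLog, negMulLog,
    logb, logb]
  ring

theorem stmt3 (x : ℝ) (hx0 : 0 ≤ x) (hx1 : x ≤ 1) :
    binEntropy2 (1 / 2 - x / 2) ≤ 1 - x ^ 2 / 2 := by
  have hlog2 : 0 < log 2 := log_pos one_lt_two
  have hlog2_le_one : log 2 ≤ 1 := by linarith [log_le_sub_one_of_pos two_pos]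
  rw [binEntropy2_eq_binEntropy_div_log_two, div_le_iff₀ hlog2]
  linarith [binEntropy_half_sub_half_le hx0 hx1,
    mul_nonneg (sq_nonneg x) (sub_nonneg.2 hlog2_le_one)]
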